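/- Zero 𝓗-duality gap implies sectional closedness: if (f + δ_E)^*(x*) = φ_𝓗(x*) (where φ_𝓗(x*) = inf_{H∈𝓗, μ∈ℝ₊^H} (f + ∑_{t∈H} μ_t f_t)^*(x*)), then (closure of co 𝓐_𝓗) ∩ ({x*}×ℝ) = closure( 𝓐_𝓗 ∩ ({x*}×ℝ) ). -/

import Mathlib

/-!
Every Lagrangian `f + ∑ t ∈ H, μ t • f_t` with `μ ≥ 0` lies below `f + δ_E`, so `𝓐_𝓗` is contained
in `epi (f + δ_E)^*`, which is closed and convex as an intersection of closed half-spaces, and which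
therefore also contains `cl co 𝓐_𝓗`. Under the zero duality gap, a point `(x*, r)` of `cl co 𝓐_𝓗` thus satisfies
`φ_𝓗(x*) = (f + δ_E)^*(x*) ≤ r`, so `(x*, s) ∈ 𝓐_𝓗` for every `s > r`, and these points converge
to `(x*, r)`.
-/

open scoped BigOperators Pointwise
open Classical

/-- Fenchel–Legendre conjugate of an extended-real-valued function,
evaluated on the weak* dual. -/
noncomputable def conjFn {X : Type*} [AddCommGroup X] [Module ℝ X] [TopologicalSpace X]
    (g : X → EReal) (p : WeakDual ℝ X) : EReal :=
  ⨆ x : X, ((p x : ℝ) : EReal) - g x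

/-- The Lagrangian `f + ∑_{t ∈ H} μ t • f_t` (with values in the extended reals,
using the convention `0 * (+∞) = 0`). -/
noncomputable def lagFn {X T : Type*} (f : X → EReal) (ft : T → X → EReal)
    (H : Finset T) (μ : T → ℝ) : X → EReal :=
  fun x => f x + ∑ t ∈ H, ((μ t : EReal) * ft t x)

/-- `f + δ_E`, where `E = ⋂_{t ∈ T} {f_t ≤ 0}`. -/
noncomputable def fPlusIndicator {X T : Type*} (f : X → EReal) (ft : T → X → EReal) :
    X → EReal :=
  fun x => if ∀ t : T, ft t x ≤ 0 then f x else ⊤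

/-- The epigraph (inside `X* × ℝ`) of the conjugate of `g`. -/
def epiConj {X : Type*} [AddCommGroup X] [Module ℝ X] [TopologicalSpace X]
    (g : X → EReal) : Set (WeakDual ℝ X × ℝ) :=
  {q | conjFn g q.1 ≤ (q.2 : EReal)}

/-- The set `𝓐_𝓗 = ⋃_{H ∈ 𝓗} ⋃_{μ ∈ ℝ₊^H} epi (f + ∑_{t∈H} μ_t f_t)^*`. -/
def ASet {X T : Type*} [AddCommGroup X] [Module ℝ X] [TopologicalSpace X]
    (f : X → EReal) (ft : T → X → EReal) (𝓗 : Set (Finset T)) :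
    Set (WeakDual ℝ X × ℝ) :=
  {q | ∃ H ∈ 𝓗, ∃ μ : T → ℝ, (∀ t ∈ H, 0 ≤ μ t) ∧ q ∈ epiConj (lagFn f ft H μ)}

/-- The convex cone generated by a set: `cone A = ℝ≥0 • (co A)`. -/
def coneGen {M : Type*} [AddCommMonoid M] [Module ℝ M] (A : Set M) : Set M :=
  {p | ∃ c : ℝ, 0 ≤ c ∧ ∃ q ∈ convexHull ℝ A, p = c • q}

/-- `φ_𝓗(x*) = inf_{H ∈ 𝓗, μ ∈ ℝ₊^H} (f + ∑_{t∈H} μ_t f_t)^*(x*)`. -/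
noncomputable def phiH {X T : Type*} [AddCommGroup X] [Module ℝ X] [TopologicalSpace X]
    (f : X → EReal) (ft : T → X → EReal) (𝓗 : Set (Finset T)) (p : WeakDual ℝ X) : EReal :=
  ⨅ H ∈ 𝓗, ⨅ μ : {μ : T → ℝ // ∀ t ∈ H, 0 ≤ μ t}, conjFn (lagFn f ft H μ.1) p

theorem EReal.coe_sub_le_coe_iff {a r : ℝ} {c : EReal} :
    (a : EReal) - c ≤ r ↔ ((a - r : ℝ) : EReal) ≤ c := by
  induction c <;> simp [← EReal.coe_sub, add_comm]

theorem mem_closure_of_forall_lt_mem {α : Type*} [TopologicalSpace α] {S : Set (α × ℝ)}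
    {p : α} {r : ℝ} (h : ∀ s, r < s → (p, s) ∈ S) : (p, r) ∈ closure S :=
  mem_closure_of_tendsto ((continuous_const.prodMk continuous_id).tendsto r |>.mono_left
    nhdsWithin_le_nhds) (eventually_nhdsWithin_of_forall (s := Set.Ioi r) h)

theorem lagFn_le_fPlusIndicator {X T : Type*} (f : X → EReal) (ft : T → X → EReal)
    {H : Finset T} {μ : T → ℝ} (hμ : ∀ t ∈ H, 0 ≤ μ t) : lagFn f ft H μ ≤ fPlusIndicator f ft := by
  intro x
  unfold lagFn fPlusIndicator
  split_ifs with hE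
  · exact add_le_of_nonpos_right <| Finset.sum_nonpos fun t ht =>
      mul_nonpos_of_nonneg_of_nonpos (EReal.coe_nonneg.2 (hμ t ht)) (hE t)
  · exact le_top

section Conjugate

variable {X T : Type*} [AddCommGroup X] [Module ℝ X] [TopologicalSpace X]

theorem conjFn_anti {g h : X → EReal} (hgh : g ≤ h) (p : WeakDual ℝ X) :
    conjFn h p ≤ conjFn g p :=
  iSup_mono fun x => EReal.sub_le_sub le_rfl (hgh x)

theorem epiConj_eq_iInter (g : X → EReal) :
    epiConj g = ⋂ x, {q : WeakDual ℝ X × ℝ | ((q.1 x - q.2 : ℝ) : EReal) ≤ g x} := by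
  ext q
  simp only [epiConj, conjFn, Set.mem_ofPred_eq, iSup_le_iff, Set.mem_iInter,
    EReal.coe_sub_le_coe_iff]

theorem isClosed_epiConj (g : X → EReal) : IsClosed (epiConj g) := by
  rw [epiConj_eq_iInter]
  refine isClosed_iInter fun x => isClosed_le ?_ continuous_const
  exact continuous_coe_real_ereal.comp
    (((WeakDual.eval_continuous x).comp continuous_fst).sub continuous_snd)

theorem convex_epiConj (g : X → EReal) : Convex ℝ (epiConj g) := by
  rw [epiConj_eq_iInter]
  refine convex_iInter fun x => ?_
  have hlin : IsLinearMap ℝ fun q : WeakDual ℝ X × ℝ => q.1 x - q.2 :=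
    ⟨fun q q' => show q.1 x + q'.1 x - (q.2 + q'.2) = _ by ring,
      fun c q => show c * q.1 x - c * q.2 = _ by ring⟩
  exact (convex_iff_ordConnected.2 (Set.ordConnected_Iic.preimage_mono
    EReal.coe_strictMono.monotone)).is_linear_preimage hlin

theorem ASet_subset_epiConj_fPlusIndicator (f : X → EReal) (ft : T → X → EReal)
    (𝓗 : Set (Finset T)) : ASet f ft 𝓗 ⊆ epiConj (fPlusIndicator f ft) := by
  rintro q ⟨H, -, μ, hμ, hq⟩
  exact (conjFn_anti (lagFn_le_fPlusIndicator f ft hμ) q.1).trans hq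

theorem closure_convexHull_ASet_subset_epiConj (f : X → EReal) (ft : T → X → EReal)
    (𝓗 : Set (Finset T)) :
    closure (convexHull ℝ (ASet f ft 𝓗)) ⊆ epiConj (fPlusIndicator f ft) :=
  closure_minimal (convexHull_min (ASet_subset_epiConj_fPlusIndicator f ft 𝓗)
    (convex_epiConj _)) (isClosed_epiConj _)

theorem mem_ASet_of_phiH_lt {f : X → EReal} {ft : T → X → EReal} {𝓗 : Set (Finset T)}
    {p : WeakDual ℝ X} {s : ℝ} (hs : phiH f ft 𝓗 p < s) : (p, s) ∈ ASet f ft 𝓗 := by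
  simp only [phiH, iInf_lt_iff] at hs
  obtain ⟨H, hH, ⟨μ, hμ⟩, hlt⟩ := hs
  exact ⟨H, hH, μ, hμ, hlt.le⟩

end Conjugate

theorem zero_duality_gap_implies_sectional_closedness_general {X T : Type*}
    [AddCommGroup X] [Module ℝ X] [TopologicalSpace X]
    (f : X → EReal) (ft : T → X → EReal)
    (𝓗 : Set (Finset T))
    (xs : WeakDual ℝ X)
    (hgap : conjFn (fPlusIndicator f ft) xs = phiH f ft 𝓗 xs) :
    closure (convexHull ℝ (ASet f ft 𝓗)) ∩ ({xs} ×ˢ (Set.univ : Set ℝ)) =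
      closure (ASet f ft 𝓗 ∩ ({xs} ×ˢ (Set.univ : Set ℝ))) := by
  refine subset_antisymm ?_ ?_
  · rintro ⟨p, r⟩ ⟨hcl, rfl : p = xs, -⟩
    have hphi : phiH f ft 𝓗 p ≤ r := hgap ▸ closure_convexHull_ASet_subset_epiConj f ft 𝓗 hcl
    exact mem_closure_of_forall_lt_mem fun s hs =>
      ⟨mem_ASet_of_phiH_lt (hphi.trans_lt (EReal.coe_lt_coe_iff.2 hs)), rfl, trivial⟩
  · exact closure_minimal (Set.inter_subset_inter_left _ (subset_convexHull ℝ _ |>.trans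
      subset_closure)) (isClosed_closure.inter (isClosed_singleton.prod isClosed_univ))

theorem zero_duality_gap_implies_sectional_closedness {X T : Type*}
    [AddCommGroup X] [Module ℝ X] [TopologicalSpace X]
    (f : X → EReal) (ft : T → X → EReal)
    (hf : ∀ x, f x ≠ ⊥) (hfprop : ∃ x, f x ≠ ⊤)
    (hft : ∀ t x, ft t x ≠ ⊥) (hftprop : ∀ t, ∃ x, ft t x ≠ ⊤)
    (𝓗 : Set (Finset T)) (h𝓗ne : 𝓗.Nonempty) (h𝓗mem : ∀ H ∈ 𝓗, H.Nonempty)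
    (xs : WeakDual ℝ X)
    (hgap : conjFn (fPlusIndicator f ft) xs = phiH f ft 𝓗 xs) :
    closure (convexHull ℝ (ASet f ft 𝓗)) ∩ ({xs} ×ˢ (Set.univ : Set ℝ)) =
      closure (ASet f ft 𝓗 ∩ ({xs} ×ˢ (Set.univ : Set ℝ))) :=
  zero_duality_gap_implies_sectional_closedness_general f ft 𝓗 xs hgap
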